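/- Existence of k+1 consecutive well-predicted sample points with all labels: Let k ≥ 1 and m ≥ 2(k+1) be integers, let T be a (k+1)-ary mistake tree of depth n, let 0 ≤ d_1 < … < d_m ≤ n−1 be depths, and let A be an (α,β)-accurate empirical k-list learner for T over samples of size m with α = β = k!/(10⁴·(k+1)^{k+2}). Draw a branch B uniformly at random from {0,…,k}^n and let S = ((x_1,y_1),…,(x_m,y_m)) with x_i = v_{d_i}(B), y_i = B_{d_i}. Then with probability at least 1 − exp(−μ_k²·m/(6(k+1))) over B, where μ_k = (k+1)!/(k+1)^{k+1}, there exists i ∈ {1,…,m−k} such that {y_i, y_{i+1},…,y_{i+k}} = {0,…,k} and A_{S,x_j}(y_j) < 20/(10⁴(k+1)) for every j ∈ {i,…,i+k}. -/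

import Mathlib

open MeasureTheory
open scoped ENNReal

namespace Stmt12

/-- Instances of the canonical `(k+1)`-ary mistake tree: strings over `{0,…,k}`
(the internal vertices being those of length `< n`). -/
abbrev Inst (k : ℕ) := List (Fin (k+1))

/-- Labels `{0,…,k}`. -/
abbrev Lbl (k : ℕ) := Fin (k+1)

/-- `k`-list hypotheses over the instances of the tree. -/
abbrev HypT (k : ℕ) := {h : Inst k → Finset (Lbl k) // ∀ x, (h x).card = k}

/-- The instance at depth `j` of the branch `B`: the length-`j` prefix of `B`. -/
def vOf {k : ℕ} (B : ℕ → Lbl k) (j : ℕ) : Inst k := (List.range j).map B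

/-- Two samples are neighbors if they differ in exactly one coordinate. -/
def Neighbor {α : Type} {m : ℕ} (S S' : Fin m → α) : Prop :=
  ∃ i, S i ≠ S' i ∧ ∀ j, j ≠ i → S j = S' j

/-- `(ε,δ)`-differential privacy of a randomized algorithm. -/
def IsDP {α H : Type} {m : ℕ} (A : (Fin m → α) → PMF H) (ε δ : ℝ) : Prop :=
  ∀ S S' : Fin m → α, Neighbor S S' → ∀ E : Set H,
    (A S).toOuterMeasure E ≤ ENNReal.ofReal (Real.exp ε) * (A S').toOuterMeasure E +
      ENNReal.ofReal δ

/-- `S` is realizable by the mistake tree with instance map `ρ` and depth `D`: for some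
branch `B` and strictly increasing depths `dep i < D`, the sample point `i` is the instance
at depth `dep i` of `B`, labeled by the branch-label `B (dep i)`. -/
def TReal {k m : ℕ} (ρ : (ℕ → Lbl k) → ℕ → Inst k) (D : ℕ)
    (S : Fin m → Inst k × Lbl k) : Prop :=
  ∃ B : ℕ → Lbl k, ∃ dep : Fin m → ℕ, StrictMono dep ∧
    ∀ i, dep i < D ∧ (S i).1 = ρ B (dep i) ∧ (S i).2 = B (dep i)

/-- The sample `S` extended by the labeled point `(x,y)` is realizable (by a common branch). -/
def ExtReal {k m : ℕ} (ρ : (ℕ → Lbl k) → ℕ → Inst k) (D : ℕ)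
    (S : Fin m → Inst k × Lbl k) (x : Inst k) (y : Lbl k) : Prop :=
  ∃ B : ℕ → Lbl k, ∃ dep : Fin m → ℕ, StrictMono dep ∧
    (∀ i, dep i < D ∧ (S i).1 = ρ B (dep i) ∧ (S i).2 = B (dep i)) ∧
    ∃ j, j < D ∧ x = ρ B j ∧ y = B j

/-- `loc_S(x)`: the number of sample points that are proper ancestors of `x`. -/
def locS {k m : ℕ} (S : Fin m → Inst k × Lbl k) (x : Inst k) : ℕ :=
  (Finset.univ.filter (fun i => (S i).1 ≠ x ∧ (S i).1 <+: x)).card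

/-- The type of the extended sample `S ∪ {(x,y)}`: its labels listed in order of increasing
depth, i.e. `y` inserted at position `loc_S(x)` in the label tuple of `S`. -/
def typeExt {k m : ℕ} (S : Fin m → Inst k × Lbl k) (x : Inst k) (y : Lbl k) : List (Lbl k) :=
  (List.ofFn (fun i => (S i).2)).take (locS S x) ++
    y :: (List.ofFn (fun i => (S i).2)).drop (locS S x)

/-- `A_{S,x}(y) = Pr_{h ∼ A(S)}[y ∉ h(x)]`. -/
noncomputable def err {k m : ℕ} (A : (Fin m → Inst k × Lbl k) → PMF (HypT k))
    (S : Fin m → Inst k × Lbl k) (x : Inst k) (y : Lbl k) : ℝ :=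
  ((A S).toOuterMeasure {h | y ∉ h.1 x}).toReal

/-- `A` has `γ`-comparison-based loss on the mistake tree with instance map `ρ` and depth `D`:
for every realizable sample `S` and compatible instance `x` with (minimal) extension label `y`,
the loss `A_{S,x}(y)` is within `γ` of a quantity depending only on the type of `S ∪ {(x,y)}`
and on `loc_S(x)`. -/
def HasCBLoss {k m : ℕ} (A : (Fin m → Inst k × Lbl k) → PMF (HypT k))
    (ρ : (ℕ → Lbl k) → ℕ → Inst k) (D : ℕ) (γ : ℝ) : Prop :=
  ∃ p : List (Lbl k) → ℕ → ℝ, (∀ t i, p t i ∈ Set.Icc (0:ℝ) 1) ∧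
    ∀ S : Fin m → Inst k × Lbl k, TReal ρ D S → ∀ x y, ExtReal ρ D S x y →
      (∀ y' : Lbl k, y' < y → ¬ ExtReal ρ D S x y') →
      |err A S x y - p (typeExt S x y) (locS S x)| ≤ γ

/-- `A` is an `(α,β)`-accurate empirical `k`-list learner for the mistake tree with instance
map `ρ` and depth `D`. -/
def IsEmpT {k m : ℕ} (A : (Fin m → Inst k × Lbl k) → PMF (HypT k))
    (ρ : (ℕ → Lbl k) → ℕ → Inst k) (D : ℕ) (α β : ℝ) : Prop :=
  ∀ S : Fin m → Inst k × Lbl k, TReal ρ D S →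
    (A S).toOuterMeasure
        {h | α * (m:ℝ) ≤ ((Finset.univ.filter (fun i => (S i).2 ∉ h.1 (S i).1)).card : ℝ)}
      ≤ ENNReal.ofReal β

/-- Extension of a finite branch `B ∈ {0,…,k}^n` to `ℕ`. -/
def Bext {k n : ℕ} (B : Fin n → Lbl k) : ℕ → Lbl k :=
  fun j => if h : j < n then B ⟨j, h⟩ else 0

/-- The sample determined by the branch `B` and the depths `dep`. -/
def smp {k n m : ℕ} (B : Fin n → Lbl k) (dep : Fin m → ℕ) : Fin m → Inst k × Lbl k :=
  fun i => (vOf (Bext B) (dep i), Bext B (dep i))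

/-- An almost-correct interval of length `l` starting at depth `j` on the branch `B`
(inside a tree of depth `n`), with respect to the hypothesis `h`. -/
def AlmostCorrect {k : ℕ} (B : ℕ → Lbl k) (h : HypT k) (n l j : ℕ) : Prop :=
  j + l ≤ n ∧
    (((Finset.range l).filter (fun s => B (j+s) ∉ h.1 (vOf B (j+s)))).card : ℝ)
      ≤ (l:ℝ) / (2*((k:ℝ)+1))

end Stmt12

namespace Stmt12

lemma count_tail {W : Type} [Fintype W] (N : ℕ) (P : W → Prop) [DecidablePred P]
    (σ : ℝ) :
    ((Finset.univ.filter (fun g : Fin N → W =>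
        ((Finset.univ.filter (fun w => P (g w))).card : ℝ) ≤ σ)).card : ℝ)
      ≤ Real.exp σ * (((Finset.univ.filter P).card : ℝ) * Real.exp (-1)
          + ((Finset.univ.filter (fun x => ¬ P x)).card : ℝ))^N := by
  set f : W → ℝ := fun x => if P x then Real.exp (-1) else 1 with hf
  have key : ∀ g : Fin N → W,
      Real.exp (-(((Finset.univ.filter (fun w => P (g w))).card : ℝ))) = ∏ w, f (g w) := by
    intro g
    have : ∏ w, f (g w) = ∏ w, Real.exp (if P (g w) then (-1:ℝ) else 0) := by
      apply Finset.prod_congr rfl; intro w _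
      by_cases h : P (g w) <;> simp [hf, h]
    rw [this, ← Real.exp_sum]
    congr 1
    rw [Finset.sum_ite, Finset.sum_const, Finset.sum_const]
    simp
  have step1 : ((Finset.univ.filter (fun g : Fin N → W =>
        ((Finset.univ.filter (fun w => P (g w))).card : ℝ) ≤ σ)).card : ℝ)
      ≤ ∑ g : Fin N → W, Real.exp σ * ∏ w, f (g w) := by
    rw [Finset.card_eq_sum_ones]
    push_cast
    rw [← Finset.sum_filter_add_sum_filter_not Finset.univ
      (fun g : Fin N → W => ((Finset.univ.filter (fun w => P (g w))).card : ℝ) ≤ σ)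
      (fun g => Real.exp σ * ∏ w, f (g w))]
    have h1 : ∀ g ∈ Finset.univ.filter (fun g : Fin N → W =>
        ((Finset.univ.filter (fun w => P (g w))).card : ℝ) ≤ σ),
        (1:ℝ) ≤ Real.exp σ * ∏ w, f (g w) := by
      intro g hg
      rw [Finset.mem_filter] at hg
      rw [← key g, ← Real.exp_add]
      rw [show (1:ℝ) = Real.exp 0 by simp]
      apply Real.exp_le_exp.2
      linarith [hg.2]
    calc (∑ _g ∈ Finset.univ.filter (fun g : Fin N → W =>
        ((Finset.univ.filter (fun w => P (g w))).card : ℝ) ≤ σ), (1:ℝ))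
        ≤ ∑ g ∈ Finset.univ.filter (fun g : Fin N → W =>
        ((Finset.univ.filter (fun w => P (g w))).card : ℝ) ≤ σ),
          Real.exp σ * ∏ w, f (g w) := Finset.sum_le_sum h1
      _ ≤ _ := by
          apply le_add_of_nonneg_right
          apply Finset.sum_nonneg
          intro g _
          positivity
  refine step1.trans ?_
  rw [← Finset.mul_sum]
  apply mul_le_mul_of_nonneg_left _ (Real.exp_nonneg _)
  have hprod : ∑ g : Fin N → W, ∏ w, f (g w) = (∑ x : W, f x)^N := by
    rw [show (∑ x : W, f x)^N = ∏ _w : Fin N, ∑ x : W, f x by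
      rw [Finset.prod_const, Finset.card_univ, Fintype.card_fin]]
    rw [Finset.prod_univ_sum, Fintype.piFinset_univ]
  rw [hprod]
  have hsum : ∑ x : W, f x = ((Finset.univ.filter P).card : ℝ) * Real.exp (-1)
      + ((Finset.univ.filter (fun x => ¬ P x)).card : ℝ) := by
    rw [hf, Finset.sum_ite, Finset.sum_const, Finset.sum_const]
    simp [mul_comm]
  rw [hsum]


lemma err_sum {k m : ℕ} (p : PMF (HypT k)) (S : Fin m → Inst k × Lbl k)
    (α β : ℝ) (hα : 0 ≤ α) (hβ : 0 ≤ β)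
    (h : p.toOuterMeasure {h : HypT k | α*(m:ℝ) ≤
        ((Finset.univ.filter (fun i => (S i).2 ∉ h.1 (S i).1)).card : ℝ)}
      ≤ ENNReal.ofReal β) :
    ∑ i : Fin m, (p.toOuterMeasure {h : HypT k | (S i).2 ∉ h.1 (S i).1}).toReal
      ≤ α*m + β*m := by
  classical
  set cnt : HypT k → ℕ := fun h => (Finset.univ.filter (fun i => (S i).2 ∉ h.1 (S i).1)).card
    with hcnt
  set Eb : Set (HypT k) := {h : HypT k | α*(m:ℝ) ≤ (cnt h : ℝ)} with hEb
  -- the ENNReal-valued sum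
  have key : ∑ i : Fin m, p.toOuterMeasure {h : HypT k | (S i).2 ∉ h.1 (S i).1}
      ≤ ENNReal.ofReal (α*m) + (m : ℝ≥0∞) * ENNReal.ofReal β := by
    have e1 : ∀ i : Fin m, p.toOuterMeasure {h : HypT k | (S i).2 ∉ h.1 (S i).1}
        = ∑' h : HypT k, Set.indicator {h : HypT k | (S i).2 ∉ h.1 (S i).1} p h := by
      intro i; exact PMF.toOuterMeasure_apply p _
    calc ∑ i : Fin m, p.toOuterMeasure {h : HypT k | (S i).2 ∉ h.1 (S i).1}
        = ∑ i : Fin m, ∑' h : HypT k,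
            Set.indicator {h : HypT k | (S i).2 ∉ h.1 (S i).1} p h := by
          exact Finset.sum_congr rfl (fun i _ => e1 i)
      _ = ∑' h : HypT k, ∑ i : Fin m,
            Set.indicator {h : HypT k | (S i).2 ∉ h.1 (S i).1} p h := by
          exact (Summable.tsum_finsetSum (fun i _ => ENNReal.summable)).symm
      _ = ∑' h : HypT k, p h * (cnt h : ℝ≥0∞) := by
          apply tsum_congr; intro h
          have : ∀ i : Fin m, Set.indicator {h : HypT k | (S i).2 ∉ h.1 (S i).1} p h
              = if (S i).2 ∉ h.1 (S i).1 then p h else 0 := by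
            intro i; simp [Set.indicator_apply, Set.mem_setOf_eq]
          rw [Finset.sum_congr rfl (fun i _ => this i), Finset.sum_ite, Finset.sum_const,
            Finset.sum_const]
          simp [hcnt, mul_comm]
      _ ≤ ∑' h : HypT k, (p h * ENNReal.ofReal (α*m)
            + Set.indicator Eb (fun h => p h * (m : ℝ≥0∞)) h) := by
          apply ENNReal.tsum_le_tsum; intro h
          by_cases hh : h ∈ Eb
          · have : p h * (cnt h : ℝ≥0∞) ≤ p h * (m : ℝ≥0∞) := by
              apply mul_le_mul_right
              have : cnt h ≤ m := le_trans (Finset.card_filter_le _ _) (by simp)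
              exact_mod_cast this
            calc p h * (cnt h : ℝ≥0∞) ≤ p h * (m : ℝ≥0∞) := this
              _ = Set.indicator Eb (fun h => p h * (m : ℝ≥0∞)) h := by
                  rw [Set.indicator_of_mem hh]
              _ ≤ _ := le_add_self
          · have hlt : (cnt h : ℝ) ≤ α * m := by
              rw [hEb] at hh; simp only [Set.mem_setOf_eq, not_le] at hh; linarith
            have : (cnt h : ℝ≥0∞) ≤ ENNReal.ofReal (α*m) := by
              rw [show ((cnt h : ℝ≥0∞)) = ENNReal.ofReal ((cnt h : ℝ)) by
                simp [ENNReal.ofReal_natCast]]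
              exact ENNReal.ofReal_le_ofReal hlt
            calc p h * (cnt h : ℝ≥0∞) ≤ p h * ENNReal.ofReal (α*m) :=
                mul_le_mul_right this _
              _ ≤ _ := le_add_of_nonneg_right zero_le
      _ = ENNReal.ofReal (α*m) * ∑' h, p h
            + ∑' h : HypT k, Set.indicator Eb (fun h => p h * (m : ℝ≥0∞)) h := by
          rw [ENNReal.tsum_add]
          congr 1
          rw [ENNReal.tsum_mul_right, mul_comm]
      _ ≤ ENNReal.ofReal (α*m) + (m : ℝ≥0∞) * ENNReal.ofReal β := by
          rw [PMF.tsum_coe, mul_one]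
          apply add_le_add_right
          have : ∑' h : HypT k, Set.indicator Eb (fun h => p h * (m : ℝ≥0∞)) h
              = (m : ℝ≥0∞) * p.toOuterMeasure Eb := by
            rw [PMF.toOuterMeasure_apply, ← ENNReal.tsum_mul_left]
            apply tsum_congr; intro h
            by_cases hh : h ∈ Eb
            · rw [Set.indicator_of_mem hh, Set.indicator_of_mem hh, mul_comm]
            · rw [Set.indicator_of_notMem hh, Set.indicator_of_notMem hh, mul_zero]
          rw [this]
          exact mul_le_mul_right h _
  -- pass to reals
  have hle1 : ∀ E : Set (HypT k), p.toOuterMeasure E ≤ 1 := by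
    intro E
    rw [PMF.toOuterMeasure_apply, ← PMF.tsum_coe p]
    exact ENNReal.tsum_le_tsum (fun h => Set.indicator_le_self _ _ h)
  have hfin : ∀ i : Fin m, p.toOuterMeasure {h : HypT k | (S i).2 ∉ h.1 (S i).1} ≠ ⊤ :=
    fun i => ne_top_of_le_ne_top (by simp) (hle1 _)
  have hub : (ENNReal.ofReal (α*m) + (m : ℝ≥0∞) * ENNReal.ofReal β) ≠ ⊤ := by
    simp [ENNReal.add_ne_top, ENNReal.mul_ne_top]
  have h2 := ENNReal.toReal_mono hub key
  rw [← ENNReal.toReal_sum (fun i _ => hfin i)]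
  refine h2.trans (le_of_eq ?_)
  rw [ENNReal.toReal_add (by simp) (by simp [ENNReal.mul_ne_top]), ENNReal.toReal_mul,
    ENNReal.toReal_ofReal (by positivity), ENNReal.toReal_ofReal hβ]
  simp; ring


lemma card_surj (K : ℕ) :
    (Finset.univ.filter (fun f : Fin K → Fin K => Function.Surjective f)).card
      = K.factorial := by
  classical
  have h1 : (Finset.univ.filter (fun f : Fin K → Fin K => Function.Surjective f))
      = (Finset.univ.filter (fun f : Fin K → Fin K => Function.Bijective f)) := by
    apply Finset.filter_congr
    intro f _
    exact ⟨fun h => (Fintype.bijective_iff_surjective_and_card f).2 ⟨h, rfl⟩,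
      fun h => h.2⟩
  rw [h1, ← Fintype.card_subtype]
  have e : {f : Fin K → Fin K // Function.Bijective f} ≃ Equiv.Perm (Fin K) :=
    { toFun := fun f => Equiv.ofBijective f.1 f.2
      invFun := fun e => ⟨e, e.bijective⟩
      left_inv := fun f => by ext x; rfl
      right_inv := fun e => by ext x; rfl }
  rw [Fintype.card_congr e, Fintype.card_perm, Fintype.card_fin]


/-- index of the `t`-th point of window `w`. -/
def widx {k m : ℕ} (w : Fin (m/(k+1))) (t : Fin (k+1)) : Fin m :=
  ⟨(w:ℕ)*(k+1)+(t:ℕ), by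
    have h1 : (w:ℕ)+1 ≤ m/(k+1) := w.2
    have h2 : (t:ℕ) < k+1 := t.2
    have h3 : ((w:ℕ)+1)*(k+1) = (w:ℕ)*(k+1)+(k+1) := by ring
    have h4 : ((w:ℕ)+1)*(k+1) ≤ (m/(k+1))*(k+1) := Nat.mul_le_mul_right _ h1
    have h5 : (m/(k+1))*(k+1) ≤ m := Nat.div_mul_le_self m (k+1)
    omega⟩

/-- the window labels extracted from a branch. -/
def gOf {k n m : ℕ} (dep : Fin m → ℕ) (B : Fin n → Lbl k) :
    Fin (m/(k+1)) → Fin (k+1) → Lbl k :=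
  fun w t => Bext B (dep (widx w t))

lemma widx_inj {k m : ℕ} : Function.Injective
    (fun p : Fin (m/(k+1)) × Fin (k+1) => widx p.1 p.2) := by
  rintro ⟨w, t⟩ ⟨w', t'⟩ h
  simp only [widx, Fin.mk.injEq] at h
  have key : ∀ (w : Fin (m/(k+1))) (t : Fin (k+1)),
      ((w:ℕ)*(k+1)+(t:ℕ))/(k+1) = (w:ℕ) ∧ ((w:ℕ)*(k+1)+(t:ℕ)) % (k+1) = (t:ℕ) := by
    intro w t
    constructor
    · rw [mul_comm, Nat.mul_add_div (Nat.succ_pos k), Nat.div_eq_of_lt t.2, Nat.add_zero]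
    · rw [mul_comm, Nat.mul_add_mod, Nat.mod_eq_of_lt t.2]
  have h1 := key w t
  have h2 := key w' t'
  rw [h] at h1
  have hw : w = w' := Fin.ext (by omega)
  have ht : t = t' := Fin.ext (by omega)
  rw [hw, ht]

end Stmt12

namespace Stmt12

set_option maxHeartbeats 1000000 in
/-- Existence of `k+1` consecutive well-predicted sample points carrying all `k+1` labels:
for an accurate empirical learner, with probability at least `1 − exp(−μ_k²·m/(6(k+1)))` over
a uniformly random branch `B`, the sample `S = smp B dep` has `k+1` consecutive points whose
labels cover `{0,…,k}` and on which the loss of `A(S)` is `< 20/(10⁴(k+1))`. -/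
theorem stmt12 (k m n : ℕ) (hk : 1 ≤ k) (hm : 2*(k+1) ≤ m)
    (dep : Fin m → ℕ) (hsm : StrictMono dep) (hub : ∀ i, dep i ≤ n - 1)
    (A : (Fin m → Inst k × Lbl k) → PMF (HypT k))
    (hEL : IsEmpT A vOf n ((Nat.factorial k : ℝ)/(10^4*((k:ℝ)+1)^(k+2)))
      ((Nat.factorial k : ℝ)/(10^4*((k:ℝ)+1)^(k+2)))) :
    (1 - Real.exp (-(((Nat.factorial (k+1) : ℝ)/((k:ℝ)+1)^(k+1))^2 * (m:ℝ)/(6*((k:ℝ)+1)))))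
        * (Fintype.card (Fin n → Lbl k) : ℝ)
      ≤ (Nat.card {B : Fin n → Lbl k //
          ∃ i : ℕ, i + k < m ∧
            (∀ y : Lbl k, ∃ j : Fin m, i ≤ (j:ℕ) ∧ (j:ℕ) ≤ i + k ∧ (smp B dep j).2 = y) ∧
            (∀ j : Fin m, i ≤ (j:ℕ) → (j:ℕ) ≤ i + k →
              err A (smp B dep) (smp B dep j).1 (smp B dep j).2
                < 20/(10^4*((k:ℝ)+1)))} : ℝ) := by
  classical
  -- notation
  set q : ℝ := (k:ℝ)+1 with hq
  have hq1 : (1:ℝ) ≤ q := by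
    rw [hq]; have : (0:ℝ) ≤ k := Nat.cast_nonneg k; linarith
  have hqpos : (0:ℝ) < q := by linarith
  set θ : ℝ := 20/(10^4*q) with hθ
  have hθpos : 0 < θ := by rw [hθ]; positivity
  set αv : ℝ := (Nat.factorial k : ℝ)/(10^4*q^(k+2)) with hαv
  have hαpos : 0 < αv := by rw [hαv]; positivity
  set σ : ℝ := ((Nat.factorial k : ℝ) * m)/(10*q^(k+1)) with hσ
  set μ : ℝ := (Nat.factorial (k+1) : ℝ)/q^(k+1) with hμ
  have hμpos : 0 < μ := by rw [hμ]; positivity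
  have hμ1 : μ ≤ 1 := by
    rw [hμ, div_le_one (by positivity)]
    calc ((k+1).factorial : ℝ) ≤ ((k+1)^(k+1) : ℕ) := by
          exact_mod_cast Nat.factorial_le_pow (k+1)
      _ = q^(k+1) := by push_cast [hq]; ring
  -- depth facts
  have hdep_ge : ∀ (r : ℕ) (h : r < m), r ≤ dep ⟨r, h⟩ := by
    intro r
    induction r with
    | zero => intro h; exact Nat.zero_le _
    | succ r ih =>
      intro h
      have h' : r < m := by omega
      have h1 := ih h'
      have h2 : dep ⟨r, h'⟩ < dep ⟨r+1, h⟩ := hsm (by simp [Fin.lt_def])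
      omega
  have hm0 : 0 < m := by omega
  have hn1 : 1 ≤ n := by
    by_contra hn
    have hn0 : n = 0 := by omega
    have h1 : (1:ℕ) < m := by omega
    have := hub ⟨1, h1⟩
    have := hdep_ge 1 h1
    omega
  have hdep : ∀ i, dep i < n := by
    intro i; have := hub i; omega
  have hmn : m ≤ n := by
    have h1 : m - 1 < m := by omega
    have := hdep_ge (m-1) h1
    have := hub ⟨m-1, h1⟩
    omega
  set N : ℕ := m/(k+1) with hN
  have hN2 : 2 ≤ N := by
    rw [hN]; exact (Nat.le_div_iff_mul_le (Nat.succ_pos k)).2 (by omega)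
  have hNm : N*(k+1) ≤ m := by rw [hN]; exact Nat.div_mul_le_self m (k+1)
  have hmN : m < (N+1)*(k+1) := by
    have h1 : (k+1)*N + m%(k+1) = m := by rw [hN]; exact Nat.div_add_mod m (k+1)
    have h2 : m%(k+1) < k+1 := Nat.mod_lt _ (Nat.succ_pos k)
    have h3 : (N+1)*(k+1) = (k+1)*N + (k+1) := by ring
    omega
  -- the property
  set P : (Fin n → Lbl k) → Prop := fun B =>
      ∃ i : ℕ, i + k < m ∧
        (∀ y : Lbl k, ∃ j : Fin m, i ≤ (j:ℕ) ∧ (j:ℕ) ≤ i + k ∧ (smp B dep j).2 = y) ∧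
        (∀ j : Fin m, i ≤ (j:ℕ) → (j:ℕ) ≤ i + k →
          err A (smp B dep) (smp B dep j).1 (smp B dep j).2 < θ) with hP
  -- realizability
  have hreal : ∀ B : Fin n → Lbl k, TReal vOf n (smp B dep) := by
    intro B
    exact ⟨Bext B, dep, hsm, fun i => ⟨hdep i, rfl, rfl⟩⟩
  -- step A : markov
  have stepA : ∀ B : Fin n → Lbl k,
      (((Finset.univ.filter (fun i : Fin m =>
        θ ≤ err A (smp B dep) (smp B dep i).1 (smp B dep i).2)).card : ℝ)) ≤ σ := by
    intro B
    have hsum := err_sum (A (smp B dep)) (smp B dep) αv αv hαpos.le hαpos.le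
      (hEL _ (hreal B))
    set s := Finset.univ.filter (fun i : Fin m =>
        θ ≤ err A (smp B dep) (smp B dep i).1 (smp B dep i).2) with hs
    have h1 : (s.card : ℝ) * θ ≤ ∑ i ∈ s,
        err A (smp B dep) (smp B dep i).1 (smp B dep i).2 := by
      have : (s.card : ℝ) * θ = ∑ _i ∈ s, θ := by
        rw [Finset.sum_const, nsmul_eq_mul]
      rw [this]
      apply Finset.sum_le_sum
      intro i hi
      rw [hs, Finset.mem_filter] at hi
      exact hi.2
    have h2 : ∑ i ∈ s, err A (smp B dep) (smp B dep i).1 (smp B dep i).2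
        ≤ ∑ i : Fin m, err A (smp B dep) (smp B dep i).1 (smp B dep i).2 := by
      apply Finset.sum_le_sum_of_subset_of_nonneg (Finset.subset_univ _)
      intro i _ _
      exact ENNReal.toReal_nonneg
    have h3 : ∑ i : Fin m, err A (smp B dep) (smp B dep i).1 (smp B dep i).2
        = ∑ i : Fin m, ((A (smp B dep)).toOuterMeasure
            {h : HypT k | (smp B dep i).2 ∉ h.1 (smp B dep i).1}).toReal := rfl
    have hσθ : σ * θ = αv*m + αv*m := by
      rw [hσ, hθ, hαv, pow_succ]
      field_simp
      ring
    have h4 : (s.card : ℝ) * θ ≤ σ * θ := by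
      rw [hσθ]
      calc (s.card : ℝ) * θ
          ≤ ∑ i ∈ s, err A (smp B dep) (smp B dep i).1 (smp B dep i).2 := h1
        _ ≤ ∑ i : Fin m, err A (smp B dep) (smp B dep i).1 (smp B dep i).2 := h2
        _ = _ := h3
        _ ≤ αv * m + αv * m := hsum
    exact le_of_mul_le_mul_right h4 hθpos
  -- step B : covered windows vs bad points, for bad branches
  have stepB : ∀ B : Fin n → Lbl k, ¬ P B →
      ((Finset.univ.filter (fun w : Fin (m/(k+1)) =>
          Function.Surjective (gOf dep B w))).card : ℝ) ≤ σ := by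
    intro B hB
    simp only [hP] at hB
    push_neg at hB
    have hchoice : ∀ w : Fin (m/(k+1)), ∃ j : Fin m,
        Function.Surjective (gOf dep B w) →
        ((w:ℕ)*(k+1) ≤ (j:ℕ) ∧ (j:ℕ) ≤ (w:ℕ)*(k+1)+k ∧
          θ ≤ err A (smp B dep) (smp B dep j).1 (smp B dep j).2) := by
      intro w
      by_cases hw : Function.Surjective (gOf dep B w)
      · have hik : (w:ℕ)*(k+1) + k < m := (widx w ⟨k, by omega⟩).2
        have hcov : ∀ y : Lbl k, ∃ j : Fin m, (w:ℕ)*(k+1) ≤ (j:ℕ) ∧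
            (j:ℕ) ≤ (w:ℕ)*(k+1)+k ∧ (smp B dep j).2 = y := by
          intro y
          obtain ⟨t, ht⟩ := hw y
          refine ⟨widx w t, le_add_of_nonneg_right (Nat.zero_le _), ?_, ht⟩
          have := t.2
          simp only [widx]
          omega
        obtain ⟨j, hj1, hj2, hj3⟩ := hB ((w:ℕ)*(k+1)) hik hcov
        exact ⟨j, fun _ => ⟨hj1, hj2, hj3⟩⟩
      · exact ⟨⟨0, hm0⟩, fun h => absurd h hw⟩
    choose F hF using hchoice
    have hcard : (Finset.univ.filter (fun w : Fin (m/(k+1)) =>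
        Function.Surjective (gOf dep B w))).card
        ≤ (Finset.univ.filter (fun i : Fin m =>
          θ ≤ err A (smp B dep) (smp B dep i).1 (smp B dep i).2)).card := by
      apply Finset.card_le_card_of_injOn F
      · intro w hw
        rw [Finset.mem_coe, Finset.mem_filter] at hw ⊢
        exact ⟨Finset.mem_univ _, (hF w hw.2).2.2⟩
      · intro w hw w' hw' heq
        simp only [Finset.coe_filter, Set.mem_setOf_eq] at hw hw'
        obtain ⟨hw1, hw2, -⟩ := hF w hw.2
        obtain ⟨hw1', hw2', -⟩ := hF w' hw'.2
        have e1 : ((F w : Fin m) : ℕ)/(k+1) = (w:ℕ) := by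
          apply Nat.div_eq_of_lt_le hw1
          have : ((w:ℕ)+1)*(k+1) = (w:ℕ)*(k+1)+(k+1) := by ring
          omega
        have e2 : ((F w' : Fin m) : ℕ)/(k+1) = (w':ℕ) := by
          apply Nat.div_eq_of_lt_le hw1'
          have : ((w':ℕ)+1)*(k+1) = (w':ℕ)*(k+1)+(k+1) := by ring
          omega
        apply Fin.ext
        rw [← e1, ← e2, heq]
    calc ((Finset.univ.filter (fun w : Fin (m/(k+1)) =>
          Function.Surjective (gOf dep B w))).card : ℝ)
        ≤ ((Finset.univ.filter (fun i : Fin m =>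
          θ ≤ err A (smp B dep) (smp B dep i).1 (smp B dep i).2)).card : ℝ) :=
          Nat.cast_le.2 hcard
      _ ≤ σ := stepA B
  -- step D : counting bad branches
  have stepD : (((Finset.univ.filter (fun B : Fin n → Lbl k => ¬ P B)).card : ℝ))
      ≤ ((Finset.univ.filter (fun g : Fin (m/(k+1)) → (Fin (k+1) → Lbl k) =>
            ((Finset.univ.filter (fun w => Function.Surjective (g w))).card : ℝ) ≤ σ)).card : ℝ)
        * q^(n - (k+1)*N) := by
    set D : Finset (Fin n) := Finset.image
      (fun p : Fin (m/(k+1)) × Fin (k+1) => (⟨dep (widx p.1 p.2), hdep _⟩ : Fin n))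
      Finset.univ with hD
    have hinj : Function.Injective
        (fun p : Fin (m/(k+1)) × Fin (k+1) => (⟨dep (widx p.1 p.2), hdep _⟩ : Fin n)) := by
      intro p p' hpp
      have h1 : dep (widx p.1 p.2) = dep (widx p'.1 p'.2) := by
        simpa [Fin.ext_iff] using hpp
      have h2 : widx p.1 p.2 = widx p'.1 p'.2 := hsm.injective h1
      have := widx_inj (a₁ := p) (a₂ := p') h2
      exact this
    have hDcard : D.card = N * (k+1) := by
      rw [hD, Finset.card_image_of_injective _ hinj]
      simp [hN]
    have hcompl : Fintype.card {d : Fin n // d ∉ D} = n - (k+1)*N := by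
      rw [Fintype.card_subtype_compl, Fintype.card_coe, hDcard, Fintype.card_fin,
        Nat.mul_comm]
    have hBe : ∀ (C : Fin n → Lbl k) (j : Fin m), Bext C (dep j) = C ⟨dep j, hdep j⟩ := by
      intro C j; rw [Bext, dif_pos (hdep j)]
    set Φ : (Fin n → Lbl k) →
        (Fin (m/(k+1)) → Fin (k+1) → Lbl k) × ({d : Fin n // d ∉ D} → Lbl k) :=
      fun B => (gOf dep B, fun d => B d.1) with hΦ
    have hΦinj : Function.Injective Φ := by
      intro B B' h
      have h1 : gOf dep B = gOf dep B' := congrArg Prod.fst h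
      have h2 : (fun d : {d : Fin n // d ∉ D} => B d.1)
          = (fun d : {d : Fin n // d ∉ D} => B' d.1) := congrArg Prod.snd h
      funext d
      by_cases hd : d ∈ D
      · rw [hD, Finset.mem_image] at hd
        obtain ⟨p, -, hp⟩ := hd
        have h3 := congrFun (congrFun h1 p.1) p.2
        simp only [gOf] at h3
        rw [hBe B, hBe B'] at h3
        rw [← hp]
        exact h3
      · exact congrFun h2 ⟨d, hd⟩
    have hcard : (Finset.univ.filter (fun B : Fin n → Lbl k => ¬ P B)).card
        ≤ ((Finset.univ.filter (fun g : Fin (m/(k+1)) → (Fin (k+1) → Lbl k) =>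
            ((Finset.univ.filter (fun w => Function.Surjective (g w))).card : ℝ) ≤ σ))
          ×ˢ (Finset.univ : Finset ({d : Fin n // d ∉ D} → Lbl k))).card := by
      apply Finset.card_le_card_of_injOn Φ
      · intro B hB
        rw [Finset.mem_coe, Finset.mem_filter] at hB
        rw [Finset.mem_coe, Finset.mem_product, Finset.mem_filter]
        exact ⟨⟨Finset.mem_univ _, stepB B hB.2⟩, Finset.mem_univ _⟩
      · exact fun a _ b _ h => hΦinj h
    calc (((Finset.univ.filter (fun B : Fin n → Lbl k => ¬ P B)).card : ℝ))
        ≤ (((Finset.univ.filter (fun g : Fin (m/(k+1)) → (Fin (k+1) → Lbl k) =>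
            ((Finset.univ.filter (fun w => Function.Surjective (g w))).card : ℝ) ≤ σ))
          ×ˢ (Finset.univ : Finset ({d : Fin n // d ∉ D} → Lbl k))).card : ℝ) :=
          Nat.cast_le.2 hcard
      _ = ((Finset.univ.filter (fun g : Fin (m/(k+1)) → (Fin (k+1) → Lbl k) =>
            ((Finset.univ.filter (fun w => Function.Surjective (g w))).card : ℝ) ≤ σ)).card : ℝ)
          * q^(n - (k+1)*N) := by
          rw [Finset.card_product]
          push_cast
          congr 1
          rw [Finset.card_univ, Fintype.card_fun, hcompl]
          push_cast [hq]
          simp [Fintype.card_fin]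
  -- step E : binomial tail
  have stepE : ((Finset.univ.filter (fun g : Fin (m/(k+1)) → (Fin (k+1) → Lbl k) =>
        ((Finset.univ.filter (fun w => Function.Surjective (g w))).card : ℝ) ≤ σ)).card : ℝ)
      ≤ Real.exp σ * (q^(k+1) * Real.exp (-(μ/2)))^N := by
    have hct := count_tail (W := Fin (k+1) → Lbl k) (m/(k+1))
      (fun h => Function.Surjective h) σ
    have hcs : ((Finset.univ.filter
        (fun f : Fin (k+1) → Lbl k => Function.Surjective f)).card : ℝ)
        = ((k+1).factorial : ℝ) := by exact_mod_cast card_surj (k+1)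
    have hW : Fintype.card (Fin (k+1) → Lbl k) = (k+1)^(k+1) := by
      simp [Fintype.card_fun, Fintype.card_fin]
    have hcns : ((Finset.univ.filter
        (fun f : Fin (k+1) → Lbl k => ¬ Function.Surjective f)).card : ℝ)
        = q^(k+1) - ((k+1).factorial : ℝ) := by
      have hsplit := Finset.card_filter_add_card_filter_not
        (s := (Finset.univ : Finset (Fin (k+1) → Lbl k)))
        (p := fun f => Function.Surjective f)
      rw [Finset.card_univ, hW, card_surj (k+1)] at hsplit
      have hle : (k+1).factorial ≤ (k+1)^(k+1) := Nat.factorial_le_pow (k+1)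
      have : (Finset.univ.filter
          (fun f : Fin (k+1) → Lbl k => ¬ Function.Surjective f)).card
          = (k+1)^(k+1) - (k+1).factorial := by omega
      rw [this]
      push_cast [hle, hq]
      ring
    have hbase : ((Finset.univ.filter
          (fun f : Fin (k+1) → Lbl k => Function.Surjective f)).card : ℝ) * Real.exp (-1)
        + ((Finset.univ.filter
          (fun f : Fin (k+1) → Lbl k => ¬ Function.Surjective f)).card : ℝ)
        ≤ q^(k+1) * Real.exp (-(μ/2)) := by
      rw [hcs, hcns]
      have hQpos : (0:ℝ) < q^(k+1) := by positivity
      have hmuQ : ((k+1).factorial : ℝ) = μ * q^(k+1) := by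
        rw [hμ]; field_simp
      have hexp2 : Real.exp (-1 : ℝ) ≤ 1/2 := by
        have h2e : (2:ℝ) ≤ Real.exp 1 := by
          have := Real.add_one_le_exp (1:ℝ); linarith
        rw [Real.exp_neg, one_div]
        exact inv_anti₀ (by norm_num) h2e
      have h12 : (1:ℝ) - μ/2 ≤ Real.exp (-(μ/2)) := by
        have := Real.add_one_le_exp (-(μ/2))
        linarith
      have hfacpos : (0:ℝ) < ((k+1).factorial : ℝ) := by positivity
      calc ((k+1).factorial : ℝ) * Real.exp (-1) + (q^(k+1) - ((k+1).factorial : ℝ))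
          ≤ ((k+1).factorial : ℝ) * (1/2) + (q^(k+1) - ((k+1).factorial : ℝ)) := by
            have := mul_le_mul_of_nonneg_left hexp2 hfacpos.le
            linarith
        _ = q^(k+1) * (1 - μ/2) := by rw [hmuQ]; ring
        _ ≤ q^(k+1) * Real.exp (-(μ/2)) :=
            mul_le_mul_of_nonneg_left h12 hQpos.le
    refine hct.trans ?_
    apply mul_le_mul_of_nonneg_left _ (Real.exp_nonneg _)
    apply pow_le_pow_left₀ _ hbase
    exact add_nonneg (mul_nonneg (Nat.cast_nonneg _) (Real.exp_nonneg _))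
      (Nat.cast_nonneg _)
  -- step F : numeric facts
  have hmR : (0:ℝ) ≤ m := Nat.cast_nonneg m
  have h8 : (8*(m:ℝ)) ≤ 15*q*N := by
    have hnat : 8*m ≤ 15*((k+1)*N) := by nlinarith [hmN, hN2]
    calc (8*(m:ℝ)) = ((8*m : ℕ) : ℝ) := by push_cast; ring
      _ ≤ ((15*((k+1)*N) : ℕ) : ℝ) := by exact_mod_cast hnat
      _ = 15*q*N := by push_cast [hq]; ring
  have hσμ : σ = μ*m/(10*q) := by
    rw [hσ, hμ, Nat.factorial_succ, hq]
    push_cast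
    field_simp
  have hkey : σ + μ^2*(m:ℝ)/(6*q) ≤ (N:ℝ)*μ/2 := by
    have h3 : (0:ℝ) < 6*q := by positivity
    have hE : μ^2*(m:ℝ)/(6*q) ≤ μ*m/(6*q) := by
      have h1 : μ^2 ≤ μ := by nlinarith
      have h2 : μ^2*(m:ℝ) ≤ μ*m := mul_le_mul_of_nonneg_right h1 hmR
      exact div_le_div_of_nonneg_right h2 h3.le
    have e1 : μ*m/(10*q)+μ*m/(6*q) = μ*(8*m)/(30*q) := by
      field_simp
      ring
    have e2 : μ*(15*q*N)/(30*q) = (N:ℝ)*μ/2 := by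
      field_simp
      ring
    have h4 : μ*(8*m)/(30*q) ≤ μ*(15*q*N)/(30*q) := by
      apply div_le_div_of_nonneg_right _ (by positivity : (0:ℝ) ≤ 30*q)
      exact mul_le_mul_of_nonneg_left h8 hμpos.le
    rw [hσμ]
    calc μ*m/(10*q) + μ^2*(m:ℝ)/(6*q) ≤ μ*m/(10*q) + μ*m/(6*q) := by linarith
      _ = μ*(8*m)/(30*q) := e1
      _ ≤ μ*(15*q*N)/(30*q) := h4
      _ = (N:ℝ)*μ/2 := e2
  -- counting conclusion
  have hkN : (k+1)*N ≤ n := by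
    calc (k+1)*N = N*(k+1) := Nat.mul_comm _ _
      _ ≤ m := hNm
      _ ≤ n := hmn
  have hbad : (((Finset.univ.filter (fun B : Fin n → Lbl k => ¬ P B)).card : ℝ))
      ≤ Real.exp (-(μ^2*(m:ℝ)/(6*q))) * q^n := by
    calc (((Finset.univ.filter (fun B : Fin n → Lbl k => ¬ P B)).card : ℝ))
        ≤ ((Finset.univ.filter (fun g : Fin (m/(k+1)) → (Fin (k+1) → Lbl k) =>
            ((Finset.univ.filter (fun w => Function.Surjective (g w))).card : ℝ) ≤ σ)).card : ℝ)
          * q^(n - (k+1)*N) := stepD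
      _ ≤ (Real.exp σ * (q^(k+1) * Real.exp (-(μ/2)))^N) * q^(n - (k+1)*N) := by
          apply mul_le_mul_of_nonneg_right stepE (by positivity)
      _ = (Real.exp σ * Real.exp ((N:ℝ)*(-(μ/2)))) * (q^((k+1)*N) * q^(n - (k+1)*N)) := by
          rw [mul_pow, ← pow_mul, ← Real.exp_nat_mul]
          ring
      _ = Real.exp (σ + (N:ℝ)*(-(μ/2))) * (q^((k+1)*N) * q^(n - (k+1)*N)) := by
          rw [Real.exp_add]
      _ = Real.exp (σ + (N:ℝ)*(-(μ/2))) * q^n := by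
          rw [← pow_add, Nat.add_sub_cancel' hkN]
      _ ≤ Real.exp (-(μ^2*(m:ℝ)/(6*q))) * q^n := by
          apply mul_le_mul_of_nonneg_right _ (by positivity)
          apply Real.exp_le_exp.2
          have : (N:ℝ)*(-(μ/2)) = -((N:ℝ)*μ/2) := by ring
          rw [this]
          linarith [hkey]
  have hTotcard : Fintype.card (Fin n → Lbl k) = (k+1)^n := by
    simp [Fintype.card_fun]
  have hTot : (Fintype.card (Fin n → Lbl k) : ℝ) = q^n := by
    rw [hTotcard]
    push_cast [hq]
    ring
  have hsplitP : (Finset.univ.filter P).card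
      + (Finset.univ.filter (fun B : Fin n → Lbl k => ¬ P B)).card
      = Fintype.card (Fin n → Lbl k) := by
    rw [← Finset.card_univ]
    exact Finset.card_filter_add_card_filter_not (p := P)
  have hNatcard : (Nat.card {B : Fin n → Lbl k // P B} : ℝ)
      = ((Finset.univ.filter P).card : ℝ) := by
    rw [Nat.card_eq_fintype_card, Fintype.card_subtype]
  have hfin : ((Finset.univ.filter P).card : ℝ)
      + ((Finset.univ.filter (fun B : Fin n → Lbl k => ¬ P B)).card : ℝ)
      = (Fintype.card (Fin n → Lbl k) : ℝ) := by exact_mod_cast hsplitP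
  show (1 - Real.exp (-(μ^2*(m:ℝ)/(6*q)))) * (Fintype.card (Fin n → Lbl k) : ℝ)
      ≤ (Nat.card {B : Fin n → Lbl k // P B} : ℝ)
  rw [hNatcard]
  rw [hTot] at hfin ⊢
  nlinarith [hbad, hfin]

end Stmt12
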